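/- Let h, g : ℤ → ℝ be finitely supported filters satisfying ∑_{l∈ℤ} h_l h_{l+2k} = (1/2)·δ_{k,0}, ∑_{l∈ℤ} g_l g_{l+2k} = (1/2)·δ_{k,0}, and ∑_{l∈ℤ} g_l h_{l+2k} = 0 for every integer k. Then the wavelet packet filters in distinct frequency sub-bands at the same scale are orthogonal under all 2^m-shifts: for every m ≥ 1, all 0 ≤ n₁, n₂ ≤ 2^m − 1 with n₁ ≠ n₂, and every integer k, ∑_{l∈ℤ} v_{m,n₁,l} v_{m,n₂,l+2^m k} = 0. -/

import Mathlib

open MeasureTheory ProbabilityTheory Filter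

/-- Filter selector `u_n`: equals `g` if `n mod 4 ∈ {0,3}` and `h` if `n mod 4 ∈ {1,2}`. -/
noncomputable def uF (g h : ℤ → ℝ) (n : ℕ) : ℤ → ℝ :=
  fun l => if n % 4 = 0 ∨ n % 4 = 3 then g l else h l

/-- MODWPT wavelet packet filters `v_{m,n}`, defined recursively by `v_{1,0} = g`,
`v_{1,1} = h`, and `v_{m,n,l} = ∑_k u_{n,k} v_{m-1, ⌊n/2⌋, l - 2^(m-1) k}`. -/
noncomputable def wp (g h : ℤ → ℝ) : ℕ → ℕ → ℤ → ℝ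
  | 0, _, _ => 0
  | 1, n, l => if n = 0 then g l else h l
  | (m + 2), n, l => ∑ᶠ k : ℤ, uF g h n k * wp g h (m + 1) (n / 2) (l - 2 ^ (m + 1) * k)

/-!
Each filter of level `m + 2` is a convolution of its parent at level `m + 1` with `u_n` upsampled
by `2 ^ (m + 1)`. For two such convolutions whose parents are orthogonal under all nonzero
`2 ^ (m + 1)`-shifts, the cross-correlation at lag `2 ^ (m + 1) * j` factors as
(correlation of the parents at lag `0`) · (correlation of the `u_n` at lag `j`).
Induction on the level then shows that `v_{m,n}` is orthonormal under `2 ^ m`-shifts: parents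
`⌊n₁/2⌋ ≠ ⌊n₂/2⌋` are orthogonal by induction, and two distinct siblings use one `g` and one `h`,
which are orthogonal under even shifts.
-/

open Function

section Correlation

variable {R : Type*} [CommRing R]

noncomputable def crossCorr (f₁ f₂ : ℤ → R) (d : ℤ) : R := ∑ᶠ l, f₁ l * f₂ (l + d)

noncomputable def upsampledConv (u w : ℤ → R) (c l : ℤ) : R := ∑ᶠ k, u k * w (l - c * k)

lemma crossCorr_comm (f₁ f₂ : ℤ → R) (d : ℤ) : crossCorr f₁ f₂ d = crossCorr f₂ f₁ (-d) := by
  rw [crossCorr, ← finsum_comp_equiv (Equiv.addRight (-d)), crossCorr]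
  exact finsum_congr fun l => by simp [mul_comm]

lemma finsum_comp_sub_mul_comp_sub (f₁ f₂ : ℤ → R) (a b d : ℤ) :
    ∑ᶠ l, f₁ (l - a) * f₂ (l + d - b) = crossCorr f₁ f₂ (d + a - b) := by
  rw [crossCorr, ← finsum_comp_equiv (Equiv.addRight a)]
  exact finsum_congr fun l => by simp only [Equiv.coe_addRight, add_sub_cancel_right]; ring_nf

lemma hasFiniteSupport_upsampledConv {u w : ℤ → R} (hu : HasFiniteSupport u)
    (hw : HasFiniteSupport w) (c : ℤ) : HasFiniteSupport (upsampledConv u w c) := by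
  refine ((hu.prod hw).image fun p : ℤ × ℤ => p.2 + c * p.1).subset fun l hl => ?_
  obtain ⟨k, hk⟩ : ∃ k, u k * w (l - c * k) ≠ 0 := by
    by_contra! H
    exact hl (finsum_eq_zero_of_forall_eq_zero H)
  exact ⟨(k, l - c * k), ⟨left_ne_zero_of_mul hk, right_ne_zero_of_mul hk⟩, by simp⟩

lemma upsampledConv_eq_sum {u : ℤ → R} {A : Finset ℤ} (hA : support u ⊆ A) (w : ℤ → R)
    (c l : ℤ) : upsampledConv u w c l = ∑ a ∈ A, u a * w (l - c * a) :=
  finsum_eq_sum_of_support_subset _ ((support_mul_subset_left _ _).trans hA)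

lemma crossCorr_upsampledConv {u₁ u₂ w₁ : ℤ → R} {A₁ A₂ : Finset ℤ} (hA₁ : support u₁ ⊆ A₁)
    (hA₂ : support u₂ ⊆ A₂) (hw₁ : HasFiniteSupport w₁) (w₂ : ℤ → R) (c d : ℤ) :
    crossCorr (upsampledConv u₁ w₁ c) (upsampledConv u₂ w₂ c) d =
      ∑ a ∈ A₁, ∑ b ∈ A₂, u₁ a * u₂ b * crossCorr w₁ w₂ (d + c * a - c * b) := by
  have hfin (a b : ℤ) : HasFiniteSupport fun l => w₁ (l - c * a) * w₂ (l + d - c * b) :=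
    (hw₁.fun_comp_of_injective sub_left_injective).fun_mul_left _
  rw [crossCorr]
  simp_rw [upsampledConv_eq_sum hA₁, upsampledConv_eq_sum hA₂, Finset.sum_mul_sum,
    mul_mul_mul_comm]
  rw [finsum_sum_comm _ _ fun a _ => .sum (fun b => (hfin a b).fun_mul_right _) A₂]
  refine Finset.sum_congr rfl fun a _ => ?_
  rw [finsum_sum_comm _ _ fun b _ => (hfin a b).fun_mul_right _]
  refine Finset.sum_congr rfl fun b _ => ?_
  rw [← finsum_comp_sub_mul_comp_sub, mul_finsum' _ _ (hfin a b)]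

lemma crossCorr_upsampledConv_of_orthogonal {u₁ u₂ w₁ w₂ : ℤ → R} (hu₁ : HasFiniteSupport u₁)
    (hu₂ : HasFiniteSupport u₂) (hw₁ : HasFiniteSupport w₁) {c : ℤ}
    (hw : ∀ j ≠ 0, crossCorr w₁ w₂ (c * j) = 0) (j : ℤ) :
    crossCorr (upsampledConv u₁ w₁ c) (upsampledConv u₂ w₂ c) (c * j) =
      crossCorr w₁ w₂ 0 * crossCorr u₁ u₂ j := by
  obtain ⟨A₁, hA₁⟩ : ∃ A : Finset ℤ, support u₁ ⊆ A := ⟨_, (Set.Finite.coe_toFinset hu₁).ge⟩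
  obtain ⟨A₂, hA₂⟩ : ∃ A : Finset ℤ, support u₂ ⊆ A := ⟨_, (Set.Finite.coe_toFinset hu₂).ge⟩
  have hdiag (a : ℤ) : ∑ b ∈ A₂, u₁ a * u₂ b * crossCorr w₁ w₂ (c * j + c * a - c * b) =
      u₁ a * u₂ (a + j) * crossCorr w₁ w₂ 0 := by
    rw [Finset.sum_eq_single (a + j)]
    · ring_nf
    · intro b _ hb
      rw [show c * j + c * a - c * b = c * (j + a - b) by ring, hw _ (by omega), mul_zero]
    · intro hj
      rw [notMem_support.mp (mt (@hA₂ _) hj), mul_zero, zero_mul]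
  have hcorr : crossCorr u₁ u₂ j = ∑ a ∈ A₁, u₁ a * u₂ (a + j) :=
    finsum_eq_sum_of_support_subset _ ((support_mul_subset_left _ _).trans hA₁)
  rw [crossCorr_upsampledConv hA₁ hA₂ hw₁, Finset.sum_congr rfl fun a _ => hdiag a, hcorr,
    Finset.mul_sum]
  exact Finset.sum_congr rfl fun a _ => mul_comm _ _

end Correlation

section WaveletPacket

lemma uF_eq_or (g h : ℤ → ℝ) (n : ℕ) : uF g h n = g ∨ uF g h n = h := by
  unfold uF
  split_ifs <;> simp

lemma uF_eq_or_of_ne_of_div_two_eq (g h : ℤ → ℝ) {n₁ n₂ : ℕ} (hne : n₁ ≠ n₂)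
    (hdiv : n₁ / 2 = n₂ / 2) :
    (uF g h n₁ = g ∧ uF g h n₂ = h) ∨ (uF g h n₁ = h ∧ uF g h n₂ = g) := by
  unfold uF
  by_cases h₁ : n₁ % 4 = 0 ∨ n₁ % 4 = 3
  · have h₂ : ¬(n₂ % 4 = 0 ∨ n₂ % 4 = 3) := by omega
    simp [h₁, h₂]
  · have h₂ : n₂ % 4 = 0 ∨ n₂ % 4 = 3 := by omega
    simp [h₁, h₂]

variable {g h : ℤ → ℝ}

lemma hasFiniteSupport_uF (hg : HasFiniteSupport g) (hh : HasFiniteSupport h) (n : ℕ) :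
    HasFiniteSupport (uF g h n) := by
  rcases uF_eq_or g h n with e | e <;> rw [e] <;> assumption

lemma wp_one_eq_uF {n : ℕ} (hn : n < 2) : wp g h 1 n = uF g h n := by
  interval_cases n <;> rfl

lemma wp_add_two (m n : ℕ) :
    wp g h (m + 2) n = upsampledConv (uF g h n) (wp g h (m + 1) (n / 2)) (2 ^ (m + 1)) :=
  rfl

lemma hasFiniteSupport_wp (hg : HasFiniteSupport g) (hh : HasFiniteSupport h) :
    ∀ m n, HasFiniteSupport (wp g h m n)
  | 0, _ => by simp [HasFiniteSupport, support, wp]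
  | 1, n => by by_cases hn : n = 0 <;> simp only [wp, hn, if_true, if_false] <;> assumption
  | m + 2, n => by
    rw [wp_add_two]
    exact hasFiniteSupport_upsampledConv (hasFiniteSupport_uF hg hh n)
      (hasFiniteSupport_wp hg hh (m + 1) (n / 2)) _

lemma crossCorr_uF
    (horth_g : ∀ k : ℤ, crossCorr g g (2 * k) = (1 / 2) * (if k = 0 then 1 else 0))
    (horth_h : ∀ k : ℤ, crossCorr h h (2 * k) = (1 / 2) * (if k = 0 then 1 else 0))
    (horth_gh : ∀ k : ℤ, crossCorr g h (2 * k) = 0) {n₁ n₂ : ℕ} (hdiv : n₁ / 2 = n₂ / 2)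
    (k : ℤ) : crossCorr (uF g h n₁) (uF g h n₂) (2 * k) = if n₁ = n₂ ∧ k = 0 then 1 / 2 else 0 := by
  rcases eq_or_ne n₁ n₂ with rfl | hne
  · rcases uF_eq_or g h n₁ with e | e <;> simp [e, horth_g, horth_h]
  · have horth_hg : crossCorr h g (2 * k) = 0 := by
      rw [crossCorr_comm, ← mul_neg, horth_gh]
    rcases uF_eq_or_of_ne_of_div_two_eq g h hne hdiv with ⟨e₁, e₂⟩ | ⟨e₁, e₂⟩ <;>
      simp [e₁, e₂, hne, horth_gh, horth_hg]

theorem crossCorr_wp (hg : HasFiniteSupport g) (hh : HasFiniteSupport h)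
    (horth_g : ∀ k : ℤ, crossCorr g g (2 * k) = (1 / 2) * (if k = 0 then 1 else 0))
    (horth_h : ∀ k : ℤ, crossCorr h h (2 * k) = (1 / 2) * (if k = 0 then 1 else 0))
    (horth_gh : ∀ k : ℤ, crossCorr g h (2 * k) = 0) (m : ℕ) {n₁ n₂ : ℕ}
    (hn₁ : n₁ < 2 ^ (m + 1)) (hn₂ : n₂ < 2 ^ (m + 1)) (k : ℤ) :
    crossCorr (wp g h (m + 1) n₁) (wp g h (m + 1) n₂) (2 ^ (m + 1) * k) =
      if n₁ = n₂ ∧ k = 0 then (1 / 2) ^ (m + 1) else 0 := by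
  induction m generalizing n₁ n₂ k with
  | zero =>
    rw [zero_add, pow_one] at hn₁ hn₂ ⊢
    rw [wp_one_eq_uF hn₁, wp_one_eq_uF hn₂,
      crossCorr_uF horth_g horth_h horth_gh (by omega), pow_one]
  | succ m ih =>
    have hdiv₁ : n₁ / 2 < 2 ^ (m + 1) := Nat.div_lt_of_lt_mul (by rwa [← pow_succ'])
    have hdiv₂ : n₂ / 2 < 2 ^ (m + 1) := Nat.div_lt_of_lt_mul (by rwa [← pow_succ'])
    have hparents := ih hdiv₁ hdiv₂ 0
    rw [mul_zero] at hparents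
    rw [wp_add_two, wp_add_two, show (2 : ℤ) ^ (m + 1 + 1) * k = 2 ^ (m + 1) * (2 * k) by ring,
      crossCorr_upsampledConv_of_orthogonal (hasFiniteSupport_uF hg hh n₁)
        (hasFiniteSupport_uF hg hh n₂) (hasFiniteSupport_wp hg hh _ _)
        (fun j hj => by rw [ih hdiv₁ hdiv₂, if_neg fun H => hj H.2]),
      hparents]
    by_cases hdiv : n₁ / 2 = n₂ / 2
    · rw [crossCorr_uF horth_g horth_h horth_gh hdiv]
      simp only [hdiv, and_true, if_true]
      split_ifs <;> ring
    · have hne : n₁ ≠ n₂ := fun e => hdiv (congrArg (· / 2) e)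
      simp [hdiv, hne]

end WaveletPacket

theorem stmt3_general (h g : ℤ → ℝ)
    (hhfin : (Function.support h).Finite) (hgfin : (Function.support g).Finite)
    (horth_h : ∀ k : ℤ,
      ∑ᶠ l : ℤ, h l * h (l + 2 * k) = (1 / 2) * (if k = 0 then 1 else 0))
    (horth_g : ∀ k : ℤ,
      ∑ᶠ l : ℤ, g l * g (l + 2 * k) = (1 / 2) * (if k = 0 then 1 else 0))
    (horth_gh : ∀ k : ℤ, ∑ᶠ l : ℤ, g l * h (l + 2 * k) = 0)
    (m : ℕ) (n₁ n₂ : ℕ)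
    (hn₁ : n₁ ≤ 2 ^ m - 1) (hn₂ : n₂ ≤ 2 ^ m - 1) (hne : n₁ ≠ n₂) (k : ℤ) :
    ∑ᶠ l : ℤ, wp g h m n₁ l * wp g h m n₂ (l + 2 ^ m * k) = 0 := by
  obtain ⟨m, rfl⟩ : ∃ m', m = m' + 1 := Nat.exists_eq_add_one.mpr <| Nat.pos_of_ne_zero <| by
    rintro rfl
    simp only [pow_zero, tsub_self, nonpos_iff_eq_zero] at hn₁ hn₂
    exact hne (hn₁.trans hn₂.symm)
  have hpos := Nat.one_le_two_pow (n := m + 1)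
  exact (crossCorr_wp hgfin hhfin horth_g horth_h horth_gh m (by omega) (by omega) k).trans
    (if_neg fun H => hne H.1)

/-- If the finitely supported filters `h` and `g` satisfy the even-shift
orthonormality relations and are mutually orthogonal under even shifts, then wavelet
packet filters in distinct sub-bands at the same scale are orthogonal under all
`2^m`-shifts. -/
theorem stmt3 (h g : ℤ → ℝ)
    (hhfin : (Function.support h).Finite) (hgfin : (Function.support g).Finite)
    (horth_h : ∀ k : ℤ,
      ∑ᶠ l : ℤ, h l * h (l + 2 * k) = (1 / 2) * (if k = 0 then 1 else 0))
    (horth_g : ∀ k : ℤ,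
      ∑ᶠ l : ℤ, g l * g (l + 2 * k) = (1 / 2) * (if k = 0 then 1 else 0))
    (horth_gh : ∀ k : ℤ, ∑ᶠ l : ℤ, g l * h (l + 2 * k) = 0)
    (m : ℕ) (hm : 1 ≤ m) (n₁ n₂ : ℕ)
    (hn₁ : n₁ ≤ 2 ^ m - 1) (hn₂ : n₂ ≤ 2 ^ m - 1) (hne : n₁ ≠ n₂) (k : ℤ) :
    ∑ᶠ l : ℤ, wp g h m n₁ l * wp g h m n₂ (l + 2 ^ m * k) = 0 :=
  stmt3_general h g hhfin hgfin horth_h horth_g horth_gh m n₁ n₂ hn₁ hn₂ hne k
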